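/- Let S be a tree of order n_S with a graceful labeling f such that f(u) = n_S - 1 for a vertex u of S, and let T be a tree with a graceful labeling g such that g(v) = 0 for a vertex v of T. Then the tree S Δ_{+1} T, obtained by replacing every vertex of S other than u with a copy of T identified at the vertex corresponding to v, admits a graceful labeling. -/

import Mathlib

open SimpleGraph

/-- The weight of an edge under a vertex labeling: `|f u - f v|`. -/
def edgeWt {V : Type*} (f : V → ℕ) : Sym2 V → ℕ :=
  Sym2.lift ⟨fun u v => ((f u : ℤ) - f v).natAbs, fun u v => by simp only []; omega⟩

/-- `f` is a graceful labeling of `G`: injective into `{0,...,m}` with induced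
edge weights exactly `{1,...,m}`, where `m` is the number of edges. -/
def IsGracefulLabeling {V : Type*} (G : SimpleGraph V) (f : V → ℕ) : Prop :=
  Function.Injective f ∧ (∀ v, f v ≤ G.edgeSet.ncard) ∧
    (edgeWt f) '' G.edgeSet = Set.Icc 1 G.edgeSet.ncard

/-- `G` admits a graceful labeling. -/
def IsGraceful {V : Type*} (G : SimpleGraph V) : Prop :=
  ∃ f : V → ℕ, IsGracefulLabeling G f

/-- `p` is a longest path in `G`. -/
def IsLongestPath {V : Type*} (G : SimpleGraph V) {u v : V} (p : G.Walk u v) : Prop :=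
  p.IsPath ∧ ∀ (w x : V) (q : G.Walk w x), q.IsPath → q.length ≤ p.length

/-- `G` is a tree all of whose vertices are within distance `k` of some longest path.
`k = 1` gives caterpillars, `k = 2` gives lobsters. -/
def IsKDistantTree {V : Type*} (G : SimpleGraph V) (k : ℕ) : Prop :=
  G.IsTree ∧ ∃ (u v : V) (p : G.Walk u v), IsLongestPath G p ∧
    ∀ a : V, ∃ b ∈ p.support, G.dist a b ≤ k

/-- `G` is a lobster shell: a lobster with a longest path `P` such that every vertex not
on `P` having a neighbor on `P` has degree exactly `2`. -/
def IsLobsterShell {V : Type*} (G : SimpleGraph V) : Prop :=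
  G.IsTree ∧ ∃ (u v : V) (p : G.Walk u v), IsLongestPath G p ∧
    (∀ a : V, ∃ b ∈ p.support, G.dist a b ≤ 2) ∧
    (∀ a : V, a ∉ p.support → (∃ b ∈ p.support, G.Adj a b) → (G.neighborSet a).ncard = 2)

/-- `f` is a bipartite labeling of `G`. -/
def IsBipartiteLabeling {V : Type*} (G : SimpleGraph V) (f : V → ℕ) : Prop :=
  Function.Injective f ∧ (∀ v, f v ≤ G.edgeSet.ncard) ∧
    ∃ c : ℤ, ∀ u v : V, G.Adj u v →
      ((f u : ℤ) ≤ c ∧ c < (f v : ℤ)) ∨ ((f v : ℤ) ≤ c ∧ c < (f u : ℤ))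

/-- The number of distinct edge weights induced by `f` on `G`. -/
noncomputable def distinctWeightCount {V : Type*} (G : SimpleGraph V) (f : V → ℕ) : ℕ :=
  ((edgeWt f) '' G.edgeSet).ncard

/-- The tree `S Δ₊₁ T`: every vertex of `S` other than the distinguished vertex `u` is
replaced by a copy of `T`, identified at the vertex corresponding to `v`. The vertex
`Sum.inr ()` plays the role of `u`; `Sum.inl (x, s)` is the vertex `s` in the copy of `T`
substituted for the vertex `x ≠ u` of `S` (with `Sum.inl (x, v)` the identified vertex). -/
def deltaPlusOne {VS VT : Type*} (S : SimpleGraph VS) (T : SimpleGraph VT)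
    (u : VS) (v : VT) : SimpleGraph (({x : VS // x ≠ u} × VT) ⊕ Unit) :=
  SimpleGraph.fromRel (fun a b =>
    match a, b with
    | Sum.inl ⟨x, s⟩, Sum.inl ⟨y, t⟩ =>
        (x = y ∧ T.Adj s t) ∨ (S.Adj x.1 y.1 ∧ s = v ∧ t = v)
    | Sum.inl ⟨x, s⟩, Sum.inr _ => S.Adj x.1 u ∧ s = v
    | _, _ => False)

/-!
Let `m` be the number of edges of `S` and `n` the number of vertices of `T`, and 2-colour `T`
with `v` white. In the copy of `T` at `x ≠ u`, label a white vertex `s` by `n·f(x) + g(s)` and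
a black one by `n·(m - 1 - f(x)) + g(s)`, and label `u` by `n·m`. The edges coming from `S`
then have the weights `n·(weights of f)`, i.e. all multiples of `n` in `[1, nm]`. An edge `st`
of the copy at `x` with `s` black has weight `|n(m - 1 - 2f(x)) + (g(s) - g(t))|`; as `f(x)`
runs over `0, …, m - 1` and `g(s) - g(t)` over `±1, …, ±(n - 1)`, these weights are the
non-multiples of `n` in `[1, nm]`, each hit once: a weight determines the pair
`(m - 1 - 2f(x), g(s) - g(t))` up to a common sign, and a sign change would give the same edge
of `T` two opposite orientations.
-/

namespace SimpleGraph

variable {V : Type*} {G : SimpleGraph V}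

lemma IsTree.ncard_edgeSet_add_one [Fintype V] (hG : G.IsTree) :
    G.edgeSet.ncard + 1 = Fintype.card V := by
  classical
  rw [← hG.card_edgeFinset, edgeFinset, ← Set.ncard_eq_toFinset_card']

lemma IsAcyclic.exists_bool_coloring (hG : G.IsAcyclic) (v : V) :
    ∃ ε : V → Bool, ε v = false ∧ ∀ ⦃s t⦄, G.Adj s t → ε t = !ε s := by
  obtain ⟨C⟩ := hG.colorable_two
  refine ⟨fun s => decide (C s ≠ C v), by simp, fun s t hst => ?_⟩
  have hne := C.valid hst
  change decide (C t ≠ C v) = !decide (C s ≠ C v)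
  generalize C s = a, C t = b, C v = c at hne ⊢
  fin_cases a <;> fin_cases b <;> fin_cases c <;> simp_all

end SimpleGraph

@[simp]
lemma edgeWt_mk {V : Type*} (f : V → ℕ) (x y : V) :
    edgeWt f s(x, y) = ((f x : ℤ) - f y).natAbs :=
  rfl

namespace IsGracefulLabeling

variable {V : Type*} {G : SimpleGraph V} {f : V → ℕ}

lemma edgeWt_mem_Icc (hf : IsGracefulLabeling G f) {e : Sym2 V} (he : e ∈ G.edgeSet) :
    edgeWt f e ∈ Set.Icc 1 G.edgeSet.ncard :=
  hf.2.2 ▸ Set.mem_image_of_mem _ he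

lemma lt_of_ne (hf : IsGracefulLabeling G f) {u x : V} (hfu : f u = G.edgeSet.ncard)
    (hx : x ≠ u) : f x < G.edgeSet.ncard :=
  (hf.2.1 x).lt_of_ne fun h => hx (hf.1 (h.trans hfu.symm))

lemma exists_edgeWt_eq (hf : IsGracefulLabeling G f) {j : ℕ}
    (hj : j ∈ Set.Icc 1 G.edgeSet.ncard) : ∃ e ∈ G.edgeSet, edgeWt f e = j := by
  rwa [← hf.2.2] at hj

lemma injOn_edgeWt [Finite V] (hf : IsGracefulLabeling G f) :
    Set.InjOn (edgeWt f) G.edgeSet :=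
  Set.injOn_of_ncard_image_eq (by rw [hf.2.2, Set.ncard_Icc_nat, Nat.add_sub_cancel])

lemma exists_eq_of_isTree [Fintype V] (hf : IsGracefulLabeling G f) (hG : G.IsTree) {a : ℕ}
    (ha : a ≤ G.edgeSet.ncard) : ∃ x, f x = a := by
  obtain ⟨x, -, hx⟩ := Finset.surj_on_of_inj_on_of_card_le (s := Finset.univ)
    (t := Finset.range (G.edgeSet.ncard + 1)) (fun x _ => f x)
    (fun x _ => Finset.mem_range_succ_iff.mpr (hf.2.1 x)) (fun _ _ _ _ h => hf.1 h)
    (by rw [Finset.card_range, Finset.card_univ, hG.ncard_edgeSet_add_one]) a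
    (Finset.mem_range_succ_iff.mpr ha)
  exact ⟨x, hx.symm⟩

end IsGracefulLabeling

lemma not_dvd_natAbs_mul_add {n : ℕ} {K D : ℤ} (hD : D ≠ 0) (hDn : D.natAbs < n) :
    ¬ n ∣ ((n : ℤ) * K + D).natAbs := by
  rw [← Int.natCast_dvd, dvd_add_right (dvd_mul_right _ _), Int.natCast_dvd]
  exact fun h => (Nat.le_of_dvd (Int.natAbs_pos.2 hD) h).not_gt hDn

lemma natAbs_mul_sub_add_lt {n m a : ℕ} {D : ℤ} (ha : a < m) (hD : D.natAbs < n) :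
    ((n : ℤ) * (m - 1 - 2 * a) + D).natAbs < n * m := by
  replace hD : |D| < n := by rw [Int.abs_eq_natAbs]; exact_mod_cast hD
  have ha' : (a : ℤ) + 1 ≤ m := by exact_mod_cast ha
  have hn : (0 : ℤ) ≤ n := by positivity
  zify
  rw [abs_lt] at hD ⊢
  constructor <;> nlinarith [mul_nonneg hn (Nat.cast_nonneg (α := ℤ) a)]

lemma natAbs_mul_sub_add_inj {n m a a' : ℕ} {D D' : ℤ} (hD : D.natAbs < n)
    (hD' : D'.natAbs < n)
    (h : ((n : ℤ) * (m - 1 - 2 * a) + D).natAbs = ((n : ℤ) * (m - 1 - 2 * a') + D').natAbs) :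
    (a = a' ∧ D = D') ∨ D = -D' := by
  replace hD : |D| < n := by rw [Int.abs_eq_natAbs]; exact_mod_cast hD
  replace hD' : |D'| < n := by rw [Int.abs_eq_natAbs]; exact_mod_cast hD'
  have hn : (0 : ℤ) < n := lt_of_le_of_lt (abs_nonneg D) hD
  rcases Int.natAbs_eq_natAbs_iff.mp h with h | h
  · have hdiff : D' - D = 0 :=
      Int.eq_zero_of_abs_lt_dvd (m := 2 * n) ⟨a' - a, by linarith⟩
        (by rw [abs_lt] at hD hD' ⊢; constructor <;> linarith)
    have : (n : ℤ) * (a' - a) = 0 := by linarith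
    left
    constructor
    · exact_mod_cast (sub_eq_zero.mp ((mul_eq_zero.mp this).resolve_left hn.ne')).symm
    · linarith
  · have hsum : D + D' = 0 :=
      Int.eq_zero_of_abs_lt_dvd (m := 2 * n) ⟨-(m - 1 - a - a'), by linarith⟩
        (by rw [abs_lt] at hD hD' ⊢; constructor <;> linarith)
    exact Or.inr (by linarith)

lemma exists_natAbs_mul_sub_add_eq {n m w : ℕ} (hw : ¬ n ∣ w) (hwm : w ≤ n * m) :
    ∃ j, 0 < j ∧ j < n ∧ ∀ D : ℤ, D.natAbs = j →
      ∃ a < m, ((n : ℤ) * (m - 1 - 2 * a) + D).natAbs = w := by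
  have hn : 0 < n := Nat.pos_of_ne_zero fun h => hw (by simp_all)
  have hr : 0 < w % n := Nat.pos_of_ne_zero fun h => hw (Nat.dvd_of_mod_eq_zero h)
  have hqr := Nat.div_add_mod w n
  have hq : w / n < m := by
    by_contra! h
    nlinarith [Nat.mul_le_mul_left n h, Nat.mod_lt w hn]
  -- `w = nK + D₀` with `K ≡ m - 1 (mod 2)`; then `D = ±D₀` is matched by `m - 1 - 2a = ±K`.
  obtain ⟨K, hKm, hKpar, hKw⟩ : ∃ K : ℕ, K < m ∧ (m - 1 - K) % 2 = 0 ∧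
      0 < ((w : ℤ) - n * K).natAbs ∧ ((w : ℤ) - n * K).natAbs < n := by
    have hqr' : (w : ℤ) = n * (w / n : ℕ) + (w % n : ℕ) := by exact_mod_cast hqr.symm
    have hrn := Nat.mod_lt w hn
    by_cases hpar : (m - 1 - w / n) % 2 = 0
    · exact ⟨w / n, hq, hpar, by rw [hqr']; ring_nf; omega⟩
    · refine ⟨w / n + 1, by omega, by omega, ?_⟩
      rw [hqr']
      push_cast
      ring_nf
      omega
  refine ⟨_, hKw.1, hKw.2, fun D hD => ?_⟩
  rcases Int.natAbs_eq_natAbs_iff.mp hD with rfl | rfl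
  · refine ⟨(m - 1 - K) / 2, by omega, ?_⟩
    have : (m : ℤ) - 1 - 2 * ((m - 1 - K) / 2 : ℕ) = K := by omega
    rw [this]
    ring_nf
    simp
  · refine ⟨(m - 1 + K) / 2, by omega, ?_⟩
    have : (m : ℤ) - 1 - 2 * ((m - 1 + K) / 2 : ℕ) = -K := by omega
    rw [this, ← Int.natAbs_neg]
    ring_nf
    simp

section DeltaPlusOne

variable {VS VT : Type*} {S : SimpleGraph VS} {T : SimpleGraph VT} {u : VS} {v : VT}

open Classical in
noncomputable def deltaRoot (u : VS) (v : VT) (x : VS) : ({x : VS // x ≠ u} × VT) ⊕ Unit :=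
  if hx : x = u then .inr () else .inl (⟨x, hx⟩, v)

@[simp]
lemma deltaRoot_self : deltaRoot u v u = .inr () := dif_pos rfl

lemma deltaRoot_of_ne {x : VS} (hx : x ≠ u) : deltaRoot u v x = .inl (⟨x, hx⟩, v) :=
  dif_neg hx

@[simp]
lemma deltaRoot_coe (x : {x : VS // x ≠ u}) : deltaRoot u v x = .inl (x, v) :=
  deltaRoot_of_ne x.2

lemma deltaPlusOne_adj_deltaRoot {x y : VS} (h : S.Adj x y) :
    (deltaPlusOne S T u v).Adj (deltaRoot u v x) (deltaRoot u v y) := by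
  by_cases hx : x = u
  · subst hx
    rw [deltaRoot_self, deltaRoot_of_ne h.ne']
    simpa [deltaPlusOne] using h.symm
  by_cases hy : y = u
  · subst hy
    rw [deltaRoot_self, deltaRoot_of_ne hx]
    simpa [deltaPlusOne] using h
  rw [deltaRoot_of_ne hx, deltaRoot_of_ne hy]
  simp [deltaPlusOne, h, h.ne]

lemma deltaPlusOne_adj_inl {x : {x : VS // x ≠ u}} {s t : VT} (h : T.Adj s t) :
    (deltaPlusOne S T u v).Adj (.inl (x, s)) (.inl (x, t)) := by
  simp [deltaPlusOne, h, h.ne]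

lemma mem_edgeSet_deltaPlusOne {e : Sym2 (({x : VS // x ≠ u} × VT) ⊕ Unit)} :
    e ∈ (deltaPlusOne S T u v).edgeSet ↔
      (∃ x y, S.Adj x y ∧ s(deltaRoot u v x, deltaRoot u v y) = e) ∨
        ∃ x s t, T.Adj s t ∧ s(.inl (x, s), .inl (x, t)) = e := by
  refine ⟨fun he => ?_, ?_⟩
  · induction e using Sym2.ind with
    | _ a b =>
    obtain ⟨-, hab⟩ := he
    rcases a with ⟨x, s⟩ | ⟨⟩ <;> rcases b with ⟨y, t⟩ | ⟨⟩ <;> simp only at hab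
    · rcases hab with
        (⟨rfl, hst⟩ | ⟨hxy, rfl, rfl⟩) | (⟨rfl, hts⟩ | ⟨hyx, rfl, rfl⟩)
      · exact .inr ⟨x, s, t, hst, rfl⟩
      · exact .inl ⟨x, y, hxy, by simp only [deltaRoot_coe]⟩
      · exact .inr ⟨y, t, s, hts, Sym2.eq_swap⟩
      · exact .inl ⟨y, x, hyx, by simp only [deltaRoot_coe, Sym2.eq_swap]⟩
    · obtain ⟨hxu, rfl⟩ := hab.resolve_right id
      exact .inl ⟨x, u, hxu, by simp⟩
    · obtain ⟨hyu, rfl⟩ := hab.resolve_left id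
      exact .inl ⟨u, y, hyu.symm, by simp⟩
    · exact (hab.elim id id).elim
  · rintro (⟨x, y, h, rfl⟩ | ⟨x, s, t, h, rfl⟩)
    · exact deltaPlusOne_adj_deltaRoot h
    · exact deltaPlusOne_adj_inl h

end DeltaPlusOne

section DeltaLabel

variable {VS VT : Type*} {T : SimpleGraph VT} {u : VS} {v : VT}
  {m n : ℕ} {f : VS → ℕ} {g : VT → ℕ} {ε : VT → Bool}

variable (m n f g ε) in
def deltaLabel : ({x : VS // x ≠ u} × VT) ⊕ Unit → ℕ
  | .inl (x, s) => n * (if ε s then m - 1 - f x else f x) + g s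
  | .inr _ => n * m

variable (g ε) in
def orientedDiff (s t : VT) : ℤ :=
  if ε s then (g s : ℤ) - g t else (g t : ℤ) - g s

lemma natAbs_orientedDiff (s t : VT) : (orientedDiff g ε s t).natAbs = edgeWt g s(s, t) := by
  unfold orientedDiff
  split_ifs
  · rfl
  · rw [edgeWt_mk, ← Int.natAbs_neg, neg_sub]

lemma orientedDiff_eq_of_mk_eq (hε : ∀ ⦃s t⦄, T.Adj s t → ε t = !ε s) {s t s' t' : VT}
    (hst' : T.Adj s' t') (h : s(s, t) = s(s', t')) :
    orientedDiff g ε s t = orientedDiff g ε s' t' := by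
  rcases Sym2.eq_iff.mp h with ⟨rfl, rfl⟩ | ⟨rfl, rfl⟩
  · rfl
  · have := hε hst'
    cases hs : ε s <;> simp_all [orientedDiff]

lemma deltaLabel_deltaRoot (hfu : f u = m) (hgv : g v = 0) (hεv : ε v = false) (x : VS) :
    deltaLabel m n f g ε (deltaRoot u v x) = n * f x := by
  by_cases hx : x = u
  · subst hx
    rw [deltaRoot_self, deltaLabel, hfu]
  · rw [deltaRoot_of_ne hx, deltaLabel, hεv, hgv, if_neg Bool.false_ne_true, add_zero]

lemma edgeWt_deltaLabel_deltaRoot (hfu : f u = m) (hgv : g v = 0) (hεv : ε v = false)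
    (x y : VS) :
    edgeWt (deltaLabel m n f g ε) s(deltaRoot u v x, deltaRoot u v y) = n * edgeWt f s(x, y) := by
  simp only [edgeWt_mk, deltaLabel_deltaRoot hfu hgv hεv, Nat.cast_mul, ← mul_sub,
    Int.natAbs_mul, Int.natAbs_natCast]

lemma edgeWt_deltaLabel_inl {x : {x : VS // x ≠ u}} {s t : VT} (hx : f x < m)
    (hst : ε t = !ε s) :
    edgeWt (deltaLabel m n f g ε) s(.inl (x, s), .inl (x, t)) =
      ((n : ℤ) * (m - 1 - 2 * f x) + orientedDiff g ε s t).natAbs := by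
  have hcast : ((m - 1 - f x : ℕ) : ℤ) = m - 1 - f x := by omega
  cases hs : ε s <;>
    simp only [hst, hs, Bool.not_false, Bool.not_true, Bool.false_eq_true, if_true, if_false,
      edgeWt_mk, deltaLabel, orientedDiff] <;>
    push_cast [hcast]
  · rw [← Int.natAbs_neg]
    ring_nf
  · ring_nf

lemma deltaLabel_inl_lt (hfm : ∀ x, x ≠ u → f x < m) (hgn : ∀ s, g s < n)
    (x : {x : VS // x ≠ u}) (s : VT) : deltaLabel m n f g ε (.inl (x, s)) < n * m := by
  have hx := hfm x x.2
  have hc : (if ε s then m - 1 - f x else f x) + 1 ≤ m := by split_ifs <;> omega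
  calc n * (if ε s then m - 1 - f x else f x) + g s
      < n * ((if ε s then m - 1 - f x else f x) + 1) := by
        rw [mul_add_one]
        exact Nat.add_lt_add_left (hgn s) _
    _ ≤ n * m := Nat.mul_le_mul_left n hc

lemma deltaLabel_le (hfm : ∀ x, x ≠ u → f x < m) (hgn : ∀ s, g s < n) :
    ∀ z : ({x : VS // x ≠ u} × VT) ⊕ Unit, deltaLabel m n f g ε z ≤ n * m
  | .inl (x, s) => (deltaLabel_inl_lt hfm hgn x s).le
  | .inr _ => le_rfl

lemma deltaLabel_injective (hf : Function.Injective f) (hg : Function.Injective g)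
    (hfm : ∀ x, x ≠ u → f x < m) (hgn : ∀ s, g s < n) :
    Function.Injective (deltaLabel (u := u) m n f g ε) := by
  rintro (⟨x, s⟩ | ⟨⟩) (⟨y, t⟩ | ⟨⟩) h
  · have hmod := congrArg (· % n) h
    simp only [deltaLabel, Nat.mul_add_mod, Nat.mod_eq_of_lt (hgn _)] at hmod
    obtain rfl : s = t := hg hmod
    have hc := Nat.eq_of_mul_eq_mul_left (Nat.zero_lt_of_lt (hgn s)) (Nat.add_right_cancel h)
    have hx := hfm x x.2
    have hy := hfm y y.2
    have hxy : f x = f y := by split_ifs at hc <;> omega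
    rw [Subtype.ext (hf hxy)]
  · exact absurd h (deltaLabel_inl_lt hfm hgn x s).ne
  · exact absurd h.symm (deltaLabel_inl_lt hfm hgn y t).ne
  · rfl

end DeltaLabel

section DeltaPlusOneGraceful

variable {VS VT : Type*} {S : SimpleGraph VS} {T : SimpleGraph VT} {u : VS} {v : VT}
  {f : VS → ℕ} {g : VT → ℕ} {ε : VT → Bool}

lemma natAbs_orientedDiff_mem_Icc (hg : IsGracefulLabeling T g) {s t : VT} (hst : T.Adj s t) :
    (orientedDiff g ε s t).natAbs ∈ Set.Icc 1 T.edgeSet.ncard :=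
  natAbs_orientedDiff s t ▸ hg.edgeWt_mem_Icc hst

lemma image_edgeWt_deltaLabel [Fintype VS] (hS : S.IsTree) (hf : IsGracefulLabeling S f)
    (hg : IsGracefulLabeling T g) (hfu : f u = S.edgeSet.ncard) (hgv : g v = 0)
    (hεv : ε v = false) (hε : ∀ ⦃s t⦄, T.Adj s t → ε t = !ε s) :
    edgeWt (deltaLabel S.edgeSet.ncard (T.edgeSet.ncard + 1) f g ε) ''
        (deltaPlusOne S T u v).edgeSet =
      Set.Icc 1 (S.edgeSet.ncard * (T.edgeSet.ncard + 1)) := by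
  set m := S.edgeSet.ncard
  set n := T.edgeSet.ncard + 1 with hn
  ext w
  constructor
  · rintro ⟨e, he, rfl⟩
    rcases mem_edgeSet_deltaPlusOne.mp he with ⟨x, y, hxy, rfl⟩ | ⟨x, s, t, hst, rfl⟩
    · rw [edgeWt_deltaLabel_deltaRoot hfu hgv hεv, mul_comm m]
      obtain ⟨h1, h2⟩ := hf.edgeWt_mem_Icc (e := s(x, y)) hxy
      exact ⟨Nat.mul_pos (Nat.succ_pos _) h1, Nat.mul_le_mul_left n h2⟩
    · obtain ⟨hD1, hDn⟩ := natAbs_orientedDiff_mem_Icc (ε := ε) hg hst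
      have hD0 : orientedDiff g ε s t ≠ 0 := Int.natAbs_pos.mp hD1
      have hx := hf.lt_of_ne hfu x.2
      rw [edgeWt_deltaLabel_inl hx (hε hst), mul_comm m]
      refine ⟨Nat.pos_of_ne_zero fun h0 => ?_, (natAbs_mul_sub_add_lt hx (by omega)).le⟩
      exact not_dvd_natAbs_mul_add (n := n) hD0 (by omega) (h0 ▸ dvd_zero n)
  · rintro ⟨hw1, hw2⟩
    by_cases hdvd : n ∣ w
    · obtain ⟨q, rfl⟩ := hdvd
      have hq : q ∈ Set.Icc 1 m := ⟨Nat.pos_of_mul_pos_left hw1, by nlinarith⟩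
      obtain ⟨e, he, hqe⟩ := hf.exists_edgeWt_eq hq
      induction e using Sym2.ind with
      | _ x y =>
      exact ⟨_, mem_edgeSet_deltaPlusOne.mpr (.inl ⟨x, y, he, rfl⟩),
        by rw [edgeWt_deltaLabel_deltaRoot hfu hgv hεv, hqe]⟩
    · obtain ⟨j, hj0, hjn, hD⟩ := exists_natAbs_mul_sub_add_eq hdvd (by rwa [mul_comm])
      obtain ⟨e, he, hje⟩ := hg.exists_edgeWt_eq ⟨hj0, by omega⟩
      induction e using Sym2.ind with
      | _ s t =>
      obtain ⟨a, ham, ha⟩ := hD (orientedDiff g ε s t) (by rw [natAbs_orientedDiff, hje])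
      obtain ⟨x, rfl⟩ := hf.exists_eq_of_isTree hS ham.le
      have hxu : x ≠ u := by rintro rfl; omega
      exact ⟨_, mem_edgeSet_deltaPlusOne.mpr (.inr ⟨⟨x, hxu⟩, s, t, he, rfl⟩),
        by rw [edgeWt_deltaLabel_inl ham (hε he), ha]⟩

lemma injOn_edgeWt_deltaLabel [Finite VS] [Finite VT] (hf : IsGracefulLabeling S f)
    (hg : IsGracefulLabeling T g) (hfu : f u = S.edgeSet.ncard) (hgv : g v = 0)
    (hεv : ε v = false) (hε : ∀ ⦃s t⦄, T.Adj s t → ε t = !ε s) :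
    Set.InjOn (edgeWt (deltaLabel S.edgeSet.ncard (T.edgeSet.ncard + 1) f g ε))
      (deltaPlusOne S T u v).edgeSet := by
  set n := T.edgeSet.ncard + 1 with hn
  have hD {s t : VT} (hst : T.Adj s t) :
      orientedDiff g ε s t ≠ 0 ∧ (orientedDiff g ε s t).natAbs < n := by
    obtain ⟨h1, h2⟩ := natAbs_orientedDiff_mem_Icc (ε := ε) hg hst
    exact ⟨Int.natAbs_pos.mp h1, by omega⟩
  intro e₁ he₁ e₂ he₂ h
  rcases mem_edgeSet_deltaPlusOne.mp he₁ with
      ⟨x₁, y₁, hxy₁, rfl⟩ | ⟨x₁, s₁, t₁, hst₁, rfl⟩ <;>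
    rcases mem_edgeSet_deltaPlusOne.mp he₂ with
      ⟨x₂, y₂, hxy₂, rfl⟩ | ⟨x₂, s₂, t₂, hst₂, rfl⟩
  · rw [edgeWt_deltaLabel_deltaRoot hfu hgv hεv, edgeWt_deltaLabel_deltaRoot hfu hgv hεv] at h
    have hxy := hf.injOn_edgeWt hxy₁ hxy₂ (Nat.eq_of_mul_eq_mul_left (Nat.succ_pos _) h)
    simpa only [Sym2.map_mk] using congrArg (Sym2.map (deltaRoot u v)) hxy
  · rw [edgeWt_deltaLabel_deltaRoot hfu hgv hεv,
      edgeWt_deltaLabel_inl (hf.lt_of_ne hfu x₂.2) (hε hst₂)] at h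
    exact absurd (h ▸ dvd_mul_right n _) (not_dvd_natAbs_mul_add (hD hst₂).1 (hD hst₂).2)
  · rw [edgeWt_deltaLabel_deltaRoot hfu hgv hεv,
      edgeWt_deltaLabel_inl (hf.lt_of_ne hfu x₁.2) (hε hst₁)] at h
    exact absurd (h ▸ dvd_mul_right n _) (not_dvd_natAbs_mul_add (hD hst₁).1 (hD hst₁).2)
  · rw [edgeWt_deltaLabel_inl (hf.lt_of_ne hfu x₁.2) (hε hst₁),
      edgeWt_deltaLabel_inl (hf.lt_of_ne hfu x₂.2) (hε hst₂)] at h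
    have hcases := natAbs_mul_sub_add_inj (hD hst₁).2 (hD hst₂).2 h
    have hT : s(s₁, t₁) = s(s₂, t₂) := by
      refine hg.injOn_edgeWt hst₁ hst₂ ?_
      rw [← natAbs_orientedDiff (ε := ε), ← natAbs_orientedDiff (ε := ε)]
      rcases hcases with ⟨-, h'⟩ | h' <;> simp [h']
    rcases hcases with ⟨hx, -⟩ | h'
    · obtain rfl : x₁ = x₂ := Subtype.ext (hf.1 hx)
      simpa only [Sym2.map_mk] using congrArg (Sym2.map fun s => (.inl (x₁, s) : _ ⊕ Unit)) hT
    · have := orientedDiff_eq_of_mk_eq (g := g) hε hst₂ hT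
      exact absurd (by linarith : orientedDiff g ε s₁ t₁ = 0) (hD hst₁).1

theorem isGracefulLabeling_deltaLabel [Fintype VS] [Finite VT] (hS : S.IsTree)
    (hf : IsGracefulLabeling S f) (hg : IsGracefulLabeling T g) (hfu : f u = S.edgeSet.ncard)
    (hgv : g v = 0) (hεv : ε v = false) (hε : ∀ ⦃s t⦄, T.Adj s t → ε t = !ε s) :
    IsGracefulLabeling (deltaPlusOne S T u v)
      (deltaLabel S.edgeSet.ncard (T.edgeSet.ncard + 1) f g ε) := by
  have himage := image_edgeWt_deltaLabel hS hf hg hfu hgv hεv hε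
  have hcard : (deltaPlusOne S T u v).edgeSet.ncard = S.edgeSet.ncard * (T.edgeSet.ncard + 1) := by
    rw [← (injOn_edgeWt_deltaLabel hf hg hfu hgv hεv hε).ncard_image, himage,
      Set.ncard_Icc_nat, Nat.add_sub_cancel]
  have hfm (x : VS) : x ≠ u → f x < S.edgeSet.ncard := hf.lt_of_ne hfu
  have hgn (s : VT) : g s < T.edgeSet.ncard + 1 := Nat.lt_succ_of_le (hg.2.1 s)
  refine ⟨deltaLabel_injective hf.1 hg.1 hfm hgn, fun z => ?_, hcard ▸ himage⟩
  rw [hcard, mul_comm]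
  exact deltaLabel_le hfm hgn z

end DeltaPlusOneGraceful

theorem stmt11 {VS VT : Type} [Fintype VS] [Fintype VT]
    (S : SimpleGraph VS) (T : SimpleGraph VT) (u : VS) (v : VT)
    (hS : S.IsTree) (hT : T.IsTree) (f : VS → ℕ) (g : VT → ℕ)
    (hf : IsGracefulLabeling S f) (hg : IsGracefulLabeling T g)
    (hfu : f u = Nat.card VS - 1) (hgv : g v = 0) :
    IsGraceful (deltaPlusOne S T u v) := by
  obtain ⟨ε, hεv, hε⟩ := hT.isAcyclic.exists_bool_coloring v
  have hfu' : f u = S.edgeSet.ncard := by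
    rw [hfu, Nat.card_eq_fintype_card, ← hS.ncard_edgeSet_add_one, Nat.add_sub_cancel]
  exact ⟨_, isGracefulLabeling_deltaLabel hS hf hg hfu' hgv hεv hε⟩
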